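/- arXiv:math/0302302 — 3 statements merged into one kernel-verified Lean document; each statement's English description precedes it below -/
import Mathlib

section
/- If there exists a ternary square-free word of length n containing exactly k occurrences of a given fixed letter, then n ≤ 4k + 3 and 2k ≤ n + 3. (Thus, up to boundary terms, the frequency of any letter in a ternary square-free word lies between 1/4 and 1/2.) -/
/-!
Between two consecutive occurrences of `x`, as well as before the first and after the last one,
a ternary square-free word contains a square-free word over the two other letters, and such a word
has length at most 3, since every binary word of length 4 contains a square. This gives
`n ≤ 4k + 3`. Conversely `xx` is a square, so every occurrence of `x` but the last is followed by
a different letter, which gives `2k ≤ n + 1`.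
-/

/-- A word `w` is square-free if whenever `w = x ++ y ++ y ++ z`,
then `y` is the empty word. -/
def SquareFree {α : Type*} (w : List α) : Prop :=
  ∀ x y z : List α, w = x ++ y ++ y ++ z → y = []

namespace List

variable {α : Type*} [DecidableEq α]

theorem two_mul_count_le_length_add_one {x : α} :
    ∀ {w : List α}, ¬ [x, x] <:+: w → 2 * w.count x ≤ w.length + 1
  | [], _ => by simp
  | [a], _ => by by_cases ha : a = x <;> simp [ha]
  | a :: b :: t, h => by
    by_cases ha : a = x
    · subst ha
      have hb : b ≠ a := by
        rintro rfl
        exact h ⟨[], t, rfl⟩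
      have ht := two_mul_count_le_length_add_one (x := a) (w := t)
        fun h' => h (infix_cons (infix_cons h'))
      simp only [count_cons_self, count_cons_of_ne hb, length_cons]
      omega
    · have ht := two_mul_count_le_length_add_one (x := x) (w := b :: t)
        fun h' => h (infix_cons h')
      simp only [count_cons_of_ne ha, length_cons] at ht ⊢
      omega

theorem length_le_succ_mul_count_add {x : α} {m : ℕ} {w : List α}
    (h : ∀ u, u <:+: w → x ∉ u → u.length ≤ m) : w.length ≤ (m + 1) * w.count x + m := by
  by_cases hx : x ∈ w
  · obtain ⟨p, s, hp, rfl, -⟩ := exists_erase_eq hx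
    have hs := length_le_succ_mul_count_add (x := x) (w := s)
      fun u hu => h u (hu.trans ((infix_cons (infix_refl s)).trans infix_append_right))
    have hp_len := h p infix_append_left hp
    simp only [count_append, count_cons_self, count_eq_zero.mpr hp, length_append, length_cons]
    nlinarith
  · simpa [count_eq_zero.mpr hx] using h w (infix_refl w) hx
termination_by w.length
decreasing_by grind

end List

namespace SquareFree

variable {α : Type*}

theorem of_infix {u w : List α} (hw : SquareFree w) (h : u <:+: w) : SquareFree u := by
  obtain ⟨s, t, rfl⟩ := h
  intro x y z hu
  exact hw (s ++ x) y (z ++ t) (by simp [hu])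

theorem not_pair_infix {w : List α} (hw : SquareFree w) (a : α) : ¬ [a, a] <:+: w := by
  rintro ⟨s, t, rfl⟩
  exact List.cons_ne_nil a [] (hw s [a] t (by simp))

theorem length_le_three_of_forall_mem_eq_or_eq {w : List α} {a b : α} (hw : SquareFree w)
    (hab : ∀ c ∈ w, c = a ∨ c = b) : w.length ≤ 3 := by
  match w, hw, hab with
  | [], _, _ | [_], _, _ | [_, _], _, _ | [_, _, _], _, _ => simp
  | p :: q :: r :: s :: t, hw, hab =>
    exfalso
    have square : p = q ∨ q = r ∨ r = s ∨ (p = r ∧ q = s) := by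
      rcases hab p (by simp) with hp | hp <;> rcases hab q (by simp) with hq | hq <;>
        rcases hab r (by simp) with hr | hr <;> rcases hab s (by simp) with hs | hs <;>
        simp [hp, hq, hr, hs]
    rcases square with h | h | h | ⟨h₁, h₂⟩
    · exact List.cons_ne_nil _ _ (hw [] [p] (r :: s :: t) (by simp [h]))
    · exact List.cons_ne_nil _ _ (hw [p] [q] (s :: t) (by simp [h]))
    · exact List.cons_ne_nil _ _ (hw [p, q] [r] t (by simp [h]))
    · exact List.cons_ne_nil _ _ (hw [] [p, q] t (by simp [h₁, h₂]))

theorem length_le_three_of_not_mem {w : List (Fin 3)} {x : Fin 3} (hw : SquareFree w)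
    (hx : x ∉ w) : w.length ≤ 3 := by
  have two_others : ∀ x : Fin 3, ∃ a b : Fin 3, ∀ c, c ≠ x → c = a ∨ c = b := by decide
  obtain ⟨a, b, hab⟩ := two_others x
  exact hw.length_le_three_of_forall_mem_eq_or_eq fun c hc => hab c (ne_of_mem_of_not_mem hc hx)

end SquareFree

/-- If there is a ternary square-free word of length `n` with exactly `k`
occurrences of a given fixed letter `x`, then `n ≤ 4k + 3` and `2k ≤ n + 3`. -/
theorem ternary_squareFree_letter_count_bounds
    (x : Fin 3) (n k : ℕ)
    (h : ∃ w : List (Fin 3), SquareFree w ∧ w.length = n ∧ w.count x = k) :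
    n ≤ 4 * k + 3 ∧ 2 * k ≤ n + 3 := by
  obtain ⟨w, hw, rfl, rfl⟩ := h
  have upper : w.length ≤ 4 * w.count x + 3 :=
    List.length_le_succ_mul_count_add fun _ hu hx => (hw.of_infix hu).length_le_three_of_not_mem hx
  have lower := List.two_mul_count_le_length_add_one (hw.not_pair_infix x)
  omega
end

section
/- For every infinite ternary square-free word w and every letter x, the prefix frequencies of x satisfy 31/117 ≤ liminf_{n→∞} count_x(w↾n)/n and limsup_{n→∞} count_x(w↾n)/n ≤ 39/97, where w↾n denotes the prefix of w of length n and count_x denotes the number of occurrences of the letter x. -/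
/-- The factor (contiguous subword) of an infinite word `w` of length `n`
starting at position `i`. -/
def factorWord (w : ℕ → Fin 3) (i n : ℕ) : List (Fin 3) :=
  (List.range n).map (fun j => w (i + j))

/-- A finite word `u` is a factor of the infinite word `w`. -/
def IsFactor (w : ℕ → Fin 3) (u : List (Fin 3)) : Prop :=
  ∃ i : ℕ, u = factorWord w i u.length

/-- An infinite ternary word is square-free if every finite factor of it
is square-free. -/
def InfSquareFree (w : ℕ → Fin 3) : Prop :=
  ∀ u : List (Fin 3), IsFactor w u → SquareFree u

/-! Every square-free ternary word of length 30 contains each letter at least 8 times, and every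
one of length 10 at most 4 times; both facts are checked by an exhaustive branch-and-bound search
over square-free words. Cutting a prefix of an infinite square-free word into such blocks bounds
the frequency of each letter between `8/30 > 31/117` and `4/10 < 39/97`. -/

open Filter

namespace SquareFree

variable {α : Type*} {l r : List α}

theorem of_append_left (h : SquareFree (l ++ r)) : SquareFree l := fun x y z hl =>
  h x y (z ++ r) (by simp [hl])

theorem of_append_right (h : SquareFree (l ++ r)) : SquareFree r := fun x y z hr =>
  h (l ++ x) y z (by simp [hr])

end SquareFree

section BranchAndBound

variable {α : Type*} [DecidableEq α]

def hasSquarePrefix (l : List α) : Bool :=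
  (List.range (l.length / 2)).any fun j => l.take (j + 1) == (l.drop (j + 1)).take (j + 1)

theorem SquareFree.hasSquarePrefix_eq_false {l : List α} (h : SquareFree l) :
    hasSquarePrefix l = false := by
  simp only [hasSquarePrefix, List.any_eq_false, List.mem_range, beq_iff_eq]
  intro j hj hsq
  have hlen : (l.take (j + 1)).length = j + 1 := List.length_take_of_le (by omega)
  have hsplit : l = l.take (j + 1) ++ l.take (j + 1) ++ (l.drop (j + 1)).drop (j + 1) := by
    conv_lhs => rw [← List.take_append_drop (j + 1) l,
      ← List.take_append_drop (j + 1) (l.drop (j + 1)), ← hsq]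
    rw [List.append_assoc]
  have := congrArg List.length (h [] _ _ (by simpa using hsplit))
  simp [hlen] at this

variable (p : α → Bool) (letters : List α) (tab : ℕ → ℕ)

/-- Words grow at their left end, so a new square can only be a prefix; a branch is cut as soon
as the table `tab` of lower bounds for shorter words already guarantees the target `T`. -/
def boundSearch : ℕ → ℕ → List α → Bool
  | T, 0, _ => T = 0
  | T, rem + 1, v => letters.all fun a =>
      hasSquarePrefix (a :: v) ||
        (T - if p a then 1 else 0) ≤ tab rem ||
        boundSearch (T - if p a then 1 else 0) rem (a :: v)

variable {p letters tab}

theorem le_countP_of_boundSearch (hletters : ∀ a, a ∈ letters) {rem : ℕ}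
    (htab : ∀ u : List α, SquareFree u → u.length < rem → tab u.length ≤ u.countP p)
    {T : ℕ} {v : List α} (hsearch : boundSearch p letters tab T rem v = true)
    {e : List α} (he : e.length = rem) (hsf : SquareFree (e ++ v)) : T ≤ e.countP p := by
  induction rem generalizing T v e with
  | zero =>
    simp only [List.length_eq_zero_iff] at he
    simpa [boundSearch, he] using hsearch
  | succ rem ih =>
    obtain rfl | ⟨e, a, rfl⟩ := e.eq_nil_or_concat'
    · simp at he
    simp only [List.length_append, List.length_singleton, Nat.add_right_cancel_iff] at he
    rw [List.append_assoc, List.singleton_append] at hsf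
    have hsearch_a := List.all_eq_true.mp hsearch a (hletters a)
    rw [(hsf.of_append_right).hasSquarePrefix_eq_false, Bool.false_or, Bool.or_eq_true,
      decide_eq_true_iff] at hsearch_a
    have hrest : (T - if p a then 1 else 0) ≤ e.countP p := by
      rcases hsearch_a with hcut | hdeeper
      · exact hcut.trans (he ▸ htab e hsf.of_append_left (by omega))
      · exact ih (fun u hu hlen => htab u hu (by omega)) hdeeper he hsf
    rw [List.countP_append, List.countP_singleton]
    omega

variable (p letters tab) in
/-- The search certifying `tab k` only consults entries below `k`, so the table is verified
bottom-up. -/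
def countTableCheck (N : ℕ) : Bool :=
  (List.range (N + 1)).all fun k => boundSearch p letters tab (tab k) k []

theorem le_countP_of_countTableCheck (hletters : ∀ a, a ∈ letters) {N : ℕ}
    (hcheck : countTableCheck p letters tab N = true) {u : List α} (hu : SquareFree u)
    (hlen : u.length ≤ N) : tab u.length ≤ u.countP p := by
  induction hk : u.length using Nat.strong_induction_on generalizing u with
  | _ k ih =>
    have hsearch := List.all_eq_true.mp hcheck k (List.mem_range.mpr (by omega))
    refine le_countP_of_boundSearch hletters ?_ hsearch hk (by simpa using hu)
    intro u' hu' hlen'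
    exact ih _ (by omega) hu' (by omega) rfl

end BranchAndBound

/-- The least number of occurrences of a given letter (for `minOtherCountTable`: of the other two
letters) in a square-free ternary word of length `k`. -/
def minCountTable (k : ℕ) : ℕ :=
  [0, 0, 0, 0, 1, 1, 1, 1, 2, 2, 2, 2, 3, 3, 3, 3, 4, 4, 4, 5, 5, 5, 5, 6, 6, 6, 6, 7, 7, 7, 8].getD k 0

def minOtherCountTable (k : ℕ) : ℕ :=
  [0, 0, 1, 1, 2, 2, 3, 3, 4, 5, 6].getD k 0

theorem SquareFree.eight_le_count {u : List (Fin 3)} (hu : SquareFree u) (hlen : u.length = 30)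
    (x : Fin 3) : 8 ≤ u.count x := by
  have hcheck : countTableCheck (· == x) [0, 1, 2] minCountTable 30 = true := by
    revert x; decide
  have hbound : minCountTable 30 ≤ u.countP (· == x) :=
    hlen ▸ le_countP_of_countTableCheck (by decide) hcheck hu hlen.le
  exact hbound

theorem SquareFree.count_le_four {u : List (Fin 3)} (hu : SquareFree u) (hlen : u.length = 10)
    (x : Fin 3) : u.count x ≤ 4 := by
  have hcheck : countTableCheck (fun a => ¬(a == x)) [0, 1, 2] minOtherCountTable 10 = true := by
    revert x; decide
  have hbound : minOtherCountTable 10 ≤ u.countP (fun a => ¬(a == x)) :=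
    hlen ▸ le_countP_of_countTableCheck (by decide) hcheck hu hlen.le
  have hsplit := u.length_eq_countP_add_countP (· == x)
  change 6 ≤ _ at hbound
  rw [List.count_eq_countP]
  omega

section FactorWord

variable (w : ℕ → Fin 3)

@[simp]
theorem length_factorWord (i n : ℕ) : (factorWord w i n).length = n := by
  simp [factorWord]

theorem factorWord_add (i m n : ℕ) :
    factorWord w i (m + n) = factorWord w i m ++ factorWord w (i + m) n := by
  simp only [factorWord, List.range_add, List.map_append, List.map_map]
  congr 1
  exact List.map_congr_left fun j _ => by simp [Nat.add_assoc]

variable {w}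

theorem InfSquareFree.squareFree_factorWord (hw : InfSquareFree w) (i n : ℕ) :
    SquareFree (factorWord w i n) :=
  hw _ ⟨i, by rw [length_factorWord]⟩

variable {x : Fin 3} {L : ℕ}

theorem mul_le_count_factorWord {a : ℕ} (h : ∀ i, a ≤ (factorWord w i L).count x) (i q : ℕ) :
    q * a ≤ (factorWord w i (q * L)).count x := by
  induction q with
  | zero => simp
  | succ q ih =>
    rw [Nat.succ_mul q L, factorWord_add, List.count_append, Nat.succ_mul]
    exact Nat.add_le_add ih (h _)

theorem count_factorWord_le_mul {b : ℕ} (h : ∀ i, (factorWord w i L).count x ≤ b) (i q : ℕ) :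
    (factorWord w i (q * L)).count x ≤ q * b := by
  induction q with
  | zero => simp [factorWord]
  | succ q ih =>
    rw [Nat.succ_mul q L, factorWord_add, List.count_append, Nat.succ_mul]
    exact Nat.add_le_add ih (h _)

theorem count_factorWord_eq_add_mod (n : ℕ) :
    (factorWord w 0 n).count x = (factorWord w 0 (n / L * L)).count x
      + (factorWord w (n / L * L) (n % L)).count x := by
  conv_lhs => rw [← Nat.div_add_mod' n L]
  rw [factorWord_add, List.count_append, Nat.zero_add]

theorem mul_le_count_prefix (hL : 0 < L) {a : ℕ} (h : ∀ i, a ≤ (factorWord w i L).count x)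
    (n : ℕ) : a * n ≤ L * (factorWord w 0 n).count x + a * L := by
  have hblocks := mul_le_count_factorWord h 0 (n / L)
  have hsplit := count_factorWord_eq_add_mod (w := w) (x := x) (L := L) n
  calc a * n = L * (n / L * a) + a * (n % L) := by
          conv_lhs => rw [← Nat.div_add_mod' n L]
          ring
    _ ≤ L * (factorWord w 0 n).count x + a * L := by
          gcongr
          · omega
          · exact (Nat.mod_lt n hL).le

theorem count_prefix_le (hL : 0 < L) {b : ℕ} (h : ∀ i, (factorWord w i L).count x ≤ b)
    (n : ℕ) : L * (factorWord w 0 n).count x ≤ b * n + L * L := by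
  have hblocks := count_factorWord_le_mul h 0 (n / L)
  have hsplit := count_factorWord_eq_add_mod (w := w) (x := x) (L := L) n
  have hrest : (factorWord w (n / L * L) (n % L)).count x < L :=
    List.count_le_length.trans_lt ((length_factorWord ..).trans_lt (Nat.mod_lt n hL))
  calc L * (factorWord w 0 n).count x ≤ L * (n / L * b) + L * L := by
          rw [hsplit, mul_add]
          gcongr
    _ = b * (n / L * L) + L * L := by ring
    _ ≤ b * n + L * L := by
          gcongr
          exact Nat.div_mul_le_self n L

end FactorWord

section Frequency

variable {u : ℕ → ℝ} {a b L C : ℝ}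

theorem le_liminf_div_of_mul_le (hL : 0 < L) (hu : ∀ n, u n ≤ n) (h : ∀ n, a * n ≤ L * u n + C) :
    a / L ≤ liminf (fun n => u n / n) atTop := by
  have hlower : Tendsto (fun n : ℕ => a / L - C / L / n) atTop (nhds (a / L)) := by
    simpa using (tendsto_const_div_atTop_nhds_zero_nat (C / L)).const_sub (a / L)
  have hbdd : ∀ n : ℕ, u n / n ≤ 1 := fun n => div_le_one_of_le₀ (hu n) n.cast_nonneg
  rw [← hlower.liminf_eq]
  refine liminf_le_liminf ?_ hlower.isBoundedUnder_ge (isCoboundedUnder_ge_of_le atTop hbdd)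
  filter_upwards [eventually_gt_atTop 0] with n hn
  have hn : (0 : ℝ) < n := by exact_mod_cast hn
  have hfrac : a / L - C / L / n = (a * n - C) / (L * n) := by field_simp
  rw [hfrac, div_le_div_iff₀ (mul_pos hL hn) hn]
  nlinarith [h n]

theorem limsup_div_le_of_le_mul (hL : 0 < L) (hu : ∀ n, 0 ≤ u n) (h : ∀ n, L * u n ≤ b * n + C) :
    limsup (fun n => u n / n) atTop ≤ b / L := by
  have hupper : Tendsto (fun n : ℕ => b / L + C / L / n) atTop (nhds (b / L)) := by
    simpa using (tendsto_const_div_atTop_nhds_zero_nat (C / L)).const_add (b / L)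
  have hbdd : ∀ n : ℕ, 0 ≤ u n / n := fun n => div_nonneg (hu n) n.cast_nonneg
  rw [← hupper.limsup_eq]
  refine limsup_le_limsup ?_ (isCoboundedUnder_le_of_le atTop hbdd) hupper.isBoundedUnder_le
  filter_upwards [eventually_gt_atTop 0] with n hn
  have hn : (0 : ℝ) < n := by exact_mod_cast hn
  have hfrac : b / L + C / L / n = (b * n + C) / (L * n) := by field_simp
  rw [hfrac, div_le_div_iff₀ hn (mul_pos hL hn)]
  nlinarith [h n]

end Frequency

/-- For every infinite ternary square-free word `w` and every letter `x`,
the prefix frequencies of `x` satisfy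
`31/117 ≤ liminf count_x(w↾n)/n` and `limsup count_x(w↾n)/n ≤ 39/97`. -/
theorem ternary_squareFree_frequency_bounds
    (w : ℕ → Fin 3) (hw : InfSquareFree w) (x : Fin 3) :
    (31 / 117 : ℝ) ≤
        Filter.liminf (fun n : ℕ => ((factorWord w 0 n).count x : ℝ) / n) Filter.atTop ∧
      Filter.limsup (fun n : ℕ => ((factorWord w 0 n).count x : ℝ) / n) Filter.atTop ≤
        39 / 97 := by
  have hcount_le : ∀ n, ((factorWord w 0 n).count x : ℝ) ≤ n := fun n => by
    exact_mod_cast List.count_le_length.trans_eq (length_factorWord w 0 n)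
  have hlower := mul_le_count_prefix (L := 30) (by norm_num)
    fun i => (hw.squareFree_factorWord i 30).eight_le_count (length_factorWord w i 30) x
  have hupper := count_prefix_le (L := 10) (by norm_num)
    fun i => (hw.squareFree_factorWord i 10).count_le_four (length_factorWord w i 10) x
  constructor
  · calc (31 / 117 : ℝ) ≤ 8 / 30 := by norm_num
      _ ≤ _ := le_liminf_div_of_mul_le (a := 8) (C := 8 * 30) (by norm_num) hcount_le fun n => by
          exact_mod_cast hlower n
  · calc _ ≤ (4 / 10 : ℝ) := limsup_div_le_of_le_mul (b := 4) (C := 10 * 10) (by norm_num)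
          (fun n => by positivity)
          fun n => by exact_mod_cast hupper n
      _ ≤ 39 / 97 := by norm_num
end

section
/- For every real q > 0 and all m, n ≥ 0, the weighted counting polynomials of ternary square-free words satisfy s_{n+m}(q) ≤ s_n(q) · s_m(q), where s_n(q) = Σ_{k=0}^{n} s_{n,k} q^k and s_{n,k} is the number of ternary square-free words of length n containing exactly k occurrences of the fixed letter a. -/
/-- `s2 n k` is the number of ternary square-free words of length `n`
containing exactly `k` occurrences of the letter `a` (here `0 : Fin 3`). -/
noncomputable def s2 (n k : ℕ) : ℕ :=
  Nat.card {w : List (Fin 3) // w.length = n ∧ SquareFree w ∧ w.count 0 = k}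

/-- The weighted counting polynomial `s_n(q) = Σ_{k=0}^{n} s_{n,k} q^k`. -/
noncomputable def sPoly (n : ℕ) (q : ℝ) : ℝ :=
  ∑ k ∈ Finset.range (n + 1), (s2 n k : ℝ) * q ^ k

/-! Cutting a square-free word of length `n + m` after its first `n` letters gives square-free
words of lengths `n` and `m`, and the cut is injective. Since the weight `q ^ #a` is
multiplicative under concatenation and nonnegative for `q > 0`, the weighted sum over words of
length `n + m` is dominated by the weighted sum over all pairs, which is `s_n(q) · s_m(q)`. -/

open Finset

theorem SquareFree.of_infix_s13 {α : Type*} {u w : List α} (hw : SquareFree w) (huw : u <:+: w) :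
    SquareFree u := by
  obtain ⟨s, t, rfl⟩ := huw
  rintro x y z rfl
  exact hw (s ++ x) y (z ++ t) (by simp only [List.append_assoc])

theorem sum_add_le_sum_mul_sum {α R : Type*} [CommSemiring R] [PartialOrder R] [IsOrderedRing R]
    (S : ℕ → Finset (List α)) (f : List α → R) (hf_nonneg : ∀ w, 0 ≤ f w)
    (hf_append : ∀ u v, f (u ++ v) = f u * f v) (n m : ℕ)
    (hS : ∀ w ∈ S (n + m), w.take n ∈ S n ∧ w.drop n ∈ S m) :
    ∑ w ∈ S (n + m), f w ≤ (∑ u ∈ S n, f u) * ∑ v ∈ S m, f v := by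
  classical
  set cut : List α → List α × List α := fun w => (w.take n, w.drop n)
  have hcut_inj : Set.InjOn cut (S (n + m)) := fun a _ b _ h => by
    rw [← List.take_append_drop n a, ← List.take_append_drop n b]
    exact congrArg₂ (· ++ ·) (congrArg Prod.fst h) (congrArg Prod.snd h)
  calc ∑ w ∈ S (n + m), f w
      = ∑ p ∈ (S (n + m)).image cut, f p.1 * f p.2 := by
        rw [sum_image hcut_inj]
        exact sum_congr rfl fun w _ => by rw [← hf_append, List.take_append_drop]
    _ ≤ ∑ p ∈ S n ×ˢ S m, f p.1 * f p.2 := by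
        refine sum_le_sum_of_subset_of_nonneg ?_ fun p _ _ => mul_nonneg (hf_nonneg _) (hf_nonneg _)
        rintro _ hp
        obtain ⟨w, hw, rfl⟩ := mem_image.mp hp
        exact mem_product.mpr (hS w hw)
    _ = (∑ u ∈ S n, f u) * ∑ v ∈ S m, f v := by rw [sum_mul_sum, sum_product]

theorem finite_setOf_length_eq_squareFree (α : Type*) [Finite α] (n : ℕ) :
    {w : List α | w.length = n ∧ SquareFree w}.Finite :=
  (List.finite_length_eq α n).subset fun _ hw => hw.1

noncomputable def squareFreeWords (α : Type*) [Finite α] (n : ℕ) : Finset (List α) :=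
  (finite_setOf_length_eq_squareFree α n).toFinset

theorem mem_squareFreeWords {α : Type*} [Finite α] {n : ℕ} {w : List α} :
    w ∈ squareFreeWords α n ↔ w.length = n ∧ SquareFree w := by
  simp [squareFreeWords]

theorem take_drop_mem_squareFreeWords {α : Type*} [Finite α] {n m : ℕ} {w : List α}
    (hw : w ∈ squareFreeWords α (n + m)) :
    w.take n ∈ squareFreeWords α n ∧ w.drop n ∈ squareFreeWords α m := by
  obtain ⟨hlen, hsf⟩ := mem_squareFreeWords.mp hw
  exact ⟨mem_squareFreeWords.mpr ⟨by simp [hlen], hsf.of_infix_s13 (w.take_prefix n).isInfix⟩,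
    mem_squareFreeWords.mpr ⟨by simp [hlen], hsf.of_infix_s13 (w.drop_suffix n).isInfix⟩⟩

theorem s2_eq_card_filter (n k : ℕ) :
    s2 n k = #{w ∈ squareFreeWords (Fin 3) n | w.count 0 = k} := by
  rw [s2, ← Nat.card_eq_finsetCard]
  refine Nat.card_congr (Equiv.subtypeEquivRight fun w => ?_)
  simp [mem_squareFreeWords, and_assoc]

theorem sPoly_eq_sum_squareFreeWords (n : ℕ) (q : ℝ) :
    sPoly n q = ∑ w ∈ squareFreeWords (Fin 3) n, q ^ w.count 0 := by
  have hcount_lt : ∀ w ∈ squareFreeWords (Fin 3) n, w.count 0 ∈ range (n + 1) := fun w hw =>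
    mem_range.mpr (Nat.lt_succ_of_le ((mem_squareFreeWords.mp hw).1 ▸ List.count_le_length))
  rw [sPoly, ← sum_fiberwise_of_maps_to hcount_lt]
  refine sum_congr rfl fun k _ => ?_
  rw [s2_eq_card_filter, sum_congr rfl fun w hw => by rw [(mem_filter.mp hw).2], sum_const,
    nsmul_eq_mul]

/-- For every real `q > 0`, the weighted counting polynomials of ternary
square-free words satisfy `s_{n+m}(q) ≤ s_n(q) * s_m(q)`. -/
theorem ternary_squareFree_weighted_submultiplicative
    (q : ℝ) (hq : 0 < q) (n m : ℕ) :
    sPoly (n + m) q ≤ sPoly n q * sPoly m q := by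
  simp only [sPoly_eq_sum_squareFreeWords]
  exact sum_add_le_sum_mul_sum (squareFreeWords (Fin 3)) (fun w => q ^ w.count 0)
    (fun _ => pow_nonneg hq.le _) (fun u v => by rw [List.count_append, pow_add]) n m
    fun _ => take_drop_mem_squareFreeWords
end
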